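/- Let m, n ≥ 1, N = m + n, and consider the QBM Hamiltonian on (ℂ²)^{⊗N} ≅ ℂ^{2^m}⊗ℂ^{2^n}: H = −∑_{i=1}^{N} b_i σ^z_i − ∑_{1 ≤ j < i ≤ N} w_{ij} σ^z_i σ^z_j − ∑_{i=1}^{N} Γ_i σ^x_i, with real parameters b_i, w_{ij}, Γ_i. Then H is block diagonal with respect to the first factor ℂ^{2^m} (i.e. the QBM with m visible and n hidden units is a CQ-LVM) if and only if Γ_i = 0 for every visible index i ≤ m. -/

import Mathlib

open Matrix
open scoped Kronecker ComplexOrder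

noncomputable section

/-- The partial trace over the second tensor factor. -/
def ptrace {dA dB : ℕ} (ρ : Matrix (Fin dA × Fin dB) (Fin dA × Fin dB) ℂ) :
    Matrix (Fin dA) (Fin dA) ℂ :=
  Matrix.of fun a a' => ∑ b : Fin dB, ρ (a, b) (a', b)

/-- Matrix logarithm of a Hermitian matrix, applying the real logarithm to the
eigenvalues in a spectral decomposition (junk value `0` for non-Hermitian input). -/
def mlog {n : Type*} [Fintype n] [DecidableEq n] (A : Matrix n n ℂ) : Matrix n n ℂ :=
  if h : A.IsHermitian then h.cfc Real.log else 0

open Classical in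
/-- The positive semidefinite square root (junk value `0` otherwise). -/
def msqrt {n : Type*} [Fintype n] [DecidableEq n] (A : Matrix n n ℂ) : Matrix n n ℂ :=
  if h : A.PosSemidef then
    h.1.eigenvectorUnitary.1 * diagonal ((↑) ∘ (√·) ∘ h.1.eigenvalues) *
      (star h.1.eigenvectorUnitary : Matrix n n ℂ)
  else 0

/-- A density matrix: Hermitian positive semidefinite with trace one. -/
def IsDensityMatrix {n : Type*} [Fintype n] [DecidableEq n] (A : Matrix n n ℂ) : Prop :=
  A.PosSemidef ∧ A.trace = 1

/-- The von Neumann entropy `S(A) = -Tr(A log A)`. -/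
def vnEntropy {n : Type*} [Fintype n] [DecidableEq n] (A : Matrix n n ℂ) : ℂ :=
  -(A * mlog A).trace

/-- The Umegaki relative entropy `D(ω‖ρ) = Tr(ω log ω) - Tr(ω log ρ)`. -/
def relEnt {n : Type*} [Fintype n] [DecidableEq n] (ω ρ : Matrix n n ℂ) : ℂ :=
  (ω * mlog ω).trace - (ω * mlog ρ).trace

/-- The Petz recovery map for the partial trace:
`R_ρ(ω) = ρ^{1/2} ((ρ_A^{-1/2} ω ρ_A^{-1/2}) ⊗ I_B) ρ^{1/2}`. -/
def petz {dA dB : ℕ} (ρ : Matrix (Fin dA × Fin dB) (Fin dA × Fin dB) ℂ)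
    (ω : Matrix (Fin dA) (Fin dA) ℂ) : Matrix (Fin dA × Fin dB) (Fin dA × Fin dB) ℂ :=
  msqrt ρ * (((msqrt (ptrace ρ))⁻¹ * ω * (msqrt (ptrace ρ))⁻¹) ⊗ₖ
    (1 : Matrix (Fin dB) (Fin dB) ℂ)) * msqrt ρ

/-- Condition S: `ρ` is positive definite and separable of the form
`ρ = ∑ i, α i • (x i x i† ⊗ ρ_B i)` for an orthonormal basis `x` of `ℂ^{dA}`, `α i > 0`,
density matrices `ρ_B i`, and `ω` commutes with `Tr_B ρ`. -/
def CondS {dA dB : ℕ} (ω : Matrix (Fin dA) (Fin dA) ℂ)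
    (ρ : Matrix (Fin dA × Fin dB) (Fin dA × Fin dB) ℂ) : Prop :=
  ρ.PosDef ∧
  (∃ (x : Fin dA → (Fin dA → ℂ)) (α : Fin dA → ℝ) (σ : Fin dA → Matrix (Fin dB) (Fin dB) ℂ),
    (∀ i j, star (x i) ⬝ᵥ x j = if i = j then 1 else 0) ∧
    (∀ i, 0 < α i) ∧ (∀ i, IsDensityMatrix (σ i)) ∧
    ρ = ∑ i, (α i : ℂ) • (Matrix.vecMulVec (x i) (star (x i)) ⊗ₖ σ i)) ∧
  ω * ptrace ρ = ptrace ρ * ω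

/-- A matrix on a product index type is block diagonal with respect to the first factor. -/
def BlockDiagFst {α β : Type*} (M : Matrix (α × β) (α × β) ℂ) : Prop :=
  ∀ u a v b, u ≠ v → M (u, a) (v, b) = 0

/-- The `i`-th diagonal block of a matrix on a product index type. -/
def blockFst {α β : Type*} (M : Matrix (α × β) (α × β) ℂ) (i : α) : Matrix β β ℂ :=
  Matrix.of fun k l => M (i, k) (i, l)

/-- The Pauli Z matrix. -/
def pauliZ : Matrix (Fin 2) (Fin 2) ℂ := !![1, 0; 0, -1]

/-- The Pauli X matrix. -/
def pauliX : Matrix (Fin 2) (Fin 2) ℂ := !![0, 1; 1, 0]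

/-- The single-site operator `I^{⊗(i-1)} ⊗ σ ⊗ I^{⊗(N-i)}` acting on qubit `i` of `N` qubits,
with `(ℂ²)^{⊗N}` realized as matrices indexed by functions `Fin N → Fin 2`. -/
def pauliAt {N : ℕ} (σ : Matrix (Fin 2) (Fin 2) ℂ) (i : Fin N) :
    Matrix (Fin N → Fin 2) (Fin N → Fin 2) ℂ :=
  Matrix.of fun f g =>
    (∏ j ∈ Finset.univ.erase i, if f j = g j then (1 : ℂ) else 0) * σ (f i) (g i)

/-- The identification `(ℂ²)^{⊗(m+n)} ≅ ℂ^{2^m} ⊗ ℂ^{2^n}` at the level of index types: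
bit strings on `m + n` qubits correspond to pairs of bit strings. -/
def qubitSplit (m n : ℕ) : (Fin (m + n) → Fin 2) ≃ ((Fin m → Fin 2) × (Fin n → Fin 2)) :=
  (Equiv.arrowCongr finSumFinEquiv.symm (Equiv.refl (Fin 2))).trans
    (Equiv.sumArrowEquivProdArrow (Fin m) (Fin n) (Fin 2))

/-- `σ^k_i` on `m + n` qubits, viewed as a matrix on `ℂ^{2^m} ⊗ ℂ^{2^n}`. -/
def pauliAtSplit (m n : ℕ) (σ : Matrix (Fin 2) (Fin 2) ℂ) (i : Fin (m + n)) :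
    Matrix ((Fin m → Fin 2) × (Fin n → Fin 2)) ((Fin m → Fin 2) × (Fin n → Fin 2)) ℂ :=
  (pauliAt σ i).reindex (qubitSplit m n) (qubitSplit m n)

/-!
The Ising part of `H` (the `σ^z` and `σ^z σ^z` terms) is diagonal in the computational basis,
so off the diagonal `H` agrees with `-∑ Γ_i σ^x_i`. The operator `σ^x_i` only connects bit strings
that differ exactly at site `i`, where its entry is `1`. Hence if every visible `Γ_i` vanishes, no
term connects two strings whose visible parts differ; conversely, the entry of `H` between the
all-zero string and the string with a single `1` at the visible site `i` is `-Γ_i`.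
-/

namespace Matrix

variable {n α : Type*}

theorem IsDiag.mul [Fintype n] [NonUnitalNonAssocSemiring α] {A B : Matrix n n α}
    (hA : A.IsDiag) (hB : B.IsDiag) : (A * B).IsDiag := by
  intro i j hij
  rw [mul_apply]
  refine Finset.sum_eq_zero fun k _ => ?_
  by_cases hik : i = k
  · rw [← hik, hB hij, mul_zero]
  · rw [hA hik, zero_mul]

theorem isDiag_sum {ι : Type*} [AddCommMonoid α] (s : Finset ι) {A : ι → Matrix n n α}
    (h : ∀ k ∈ s, (A k).IsDiag) : (∑ k ∈ s, A k).IsDiag := by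
  intro i j hij
  rw [Matrix.sum_apply]
  exact Finset.sum_eq_zero fun k hk => h k hk hij

end Matrix

theorem blockDiagFst_isDiag_sub_iff {α β : Type*} {D X : Matrix (α × β) (α × β) ℂ}
    (hD : D.IsDiag) : BlockDiagFst (D - X) ↔ BlockDiagFst X := by
  refine forall₄_congr fun u a v b => imp_congr_right fun huv => ?_
  have hne : (u, a) ≠ (v, b) := fun h => huv (congrArg Prod.fst h)
  rw [Matrix.sub_apply, hD hne, zero_sub, neg_eq_zero]

theorem pauliZ_isDiag : pauliZ.IsDiag := by
  intro a c hac
  fin_cases a <;> fin_cases c <;> simp_all [pauliZ]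

section pauliAt

variable {N : ℕ} (σ : Matrix (Fin 2) (Fin 2) ℂ)

theorem pauliAt_apply_eq_zero {i j : Fin N} (hji : j ≠ i) {f g : Fin N → Fin 2}
    (h : f j ≠ g j) : pauliAt σ i f g = 0 := by
  rw [pauliAt, of_apply, Finset.prod_eq_zero (Finset.mem_erase.mpr ⟨hji, Finset.mem_univ j⟩)
    (if_neg h), zero_mul]

theorem pauliAt_update_apply (i : Fin N) (a : Fin 2) (g : Fin N → Fin 2) :
    pauliAt σ i (Function.update g i a) g = σ a (g i) := by
  have hagree : ∀ j ∈ Finset.univ.erase i,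
      (if Function.update g i a j = g j then (1 : ℂ) else 0) = 1 := fun j hj =>
    if_pos (Function.update_of_ne (Finset.ne_of_mem_erase hj) a g)
  rw [pauliAt, of_apply, Finset.prod_eq_one hagree, one_mul, Function.update_self]

theorem Matrix.IsDiag.pauliAt {σ : Matrix (Fin 2) (Fin 2) ℂ} (hσ : σ.IsDiag) (i : Fin N) :
    (pauliAt σ i).IsDiag := by
  intro f g hfg
  obtain ⟨j, hj⟩ := Function.ne_iff.mp hfg
  by_cases hji : j = i
  · rw [_root_.pauliAt, of_apply, ← hji, hσ hj, mul_zero]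
  · exact pauliAt_apply_eq_zero σ hji hj

theorem sum_smul_pauliAt_apply_eq_zero (c : Fin N → ℂ) {f g : Fin N → Fin 2} {j : Fin N}
    (hj : f j ≠ g j) (hc : c j = 0) : (∑ i, c i • pauliAt σ i) f g = 0 := by
  rw [Matrix.sum_apply]
  refine Finset.sum_eq_zero fun i _ => ?_
  by_cases hji : j = i
  · rw [Matrix.smul_apply, ← hji, hc, zero_smul]
  · rw [Matrix.smul_apply, pauliAt_apply_eq_zero σ hji hj, smul_zero]

theorem sum_smul_pauliAt_update_apply (c : Fin N → ℂ) {i : Fin N} {a : Fin 2}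
    {g : Fin N → Fin 2} (ha : a ≠ g i) :
    (∑ j, c j • pauliAt σ j) (Function.update g i a) g = c i * σ a (g i) := by
  rw [Matrix.sum_apply, Finset.sum_eq_single i]
  · rw [Matrix.smul_apply, pauliAt_update_apply, smul_eq_mul]
  · intro j _ hji
    rw [Matrix.smul_apply, pauliAt_apply_eq_zero σ (Ne.symm hji) (by rwa [Function.update_self]),
      smul_zero]
  · exact fun hi => absurd (Finset.mem_univ i) hi

end pauliAt

section pauliAtSplit

variable {m n : ℕ}

theorem qubitSplit_apply_fst (f : Fin (m + n) → Fin 2) (k : Fin m) :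
    (qubitSplit m n f).1 k = f (Fin.castAdd n k) := by
  simp [qubitSplit, Equiv.sumArrowEquivProdArrow, Equiv.arrowCongr]

theorem qubitSplit_symm_apply_castAdd (p : (Fin m → Fin 2) × (Fin n → Fin 2)) (k : Fin m) :
    (qubitSplit m n).symm p (Fin.castAdd n k) = p.1 k := by
  simp [qubitSplit, Equiv.sumArrowEquivProdArrow, Equiv.arrowCongr]

theorem Matrix.IsDiag.pauliAtSplit {σ : Matrix (Fin 2) (Fin 2) ℂ} (hσ : σ.IsDiag)
    (i : Fin (m + n)) : (pauliAtSplit m n σ i).IsDiag :=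
  (hσ.pauliAt i).submatrix (qubitSplit m n).symm.injective

theorem sum_smul_pauliAtSplit (σ : Matrix (Fin 2) (Fin 2) ℂ) (c : Fin (m + n) → ℂ) :
    ∑ i, c i • pauliAtSplit m n σ i =
      (∑ i, c i • pauliAt σ i).reindex (qubitSplit m n) (qubitSplit m n) := by
  simp only [pauliAtSplit, ← coe_reindexLinearEquiv ℂ ℂ, map_sum, map_smul]

theorem blockDiagFst_sum_smul_pauliAtSplit (σ : Matrix (Fin 2) (Fin 2) ℂ)
    {c : Fin (m + n) → ℂ} (hc : ∀ i : Fin (m + n), (i : ℕ) < m → c i = 0) :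
    BlockDiagFst (∑ i, c i • pauliAtSplit m n σ i) := by
  intro u a v b huv
  obtain ⟨k, hk⟩ := Function.ne_iff.mp huv
  rw [sum_smul_pauliAtSplit, reindex_apply, submatrix_apply]
  refine sum_smul_pauliAt_apply_eq_zero σ c (j := Fin.castAdd n k) ?_ (hc _ k.isLt)
  rwa [qubitSplit_symm_apply_castAdd, qubitSplit_symm_apply_castAdd]

theorem BlockDiagFst.coeff_eq_zero_of_lt {σ : Matrix (Fin 2) (Fin 2) ℂ} {c : Fin (m + n) → ℂ}
    (h : BlockDiagFst (∑ i, c i • pauliAtSplit m n σ i)) (hσ : σ 1 0 ≠ 0)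
    {i : Fin (m + n)} (hi : (i : ℕ) < m) : c i = 0 := by
  set f : Fin (m + n) → Fin 2 := Function.update 0 i 1
  have hvisible : (qubitSplit m n f).1 ≠ (qubitSplit m n 0).1 := by
    refine Function.ne_iff.mpr ⟨⟨i, hi⟩, ?_⟩
    rw [qubitSplit_apply_fst, qubitSplit_apply_fst, show Fin.castAdd n ⟨i, hi⟩ = i from rfl]
    simp [f]
  have hentry := h _ (qubitSplit m n f).2 _ (qubitSplit m n 0).2 hvisible
  rw [sum_smul_pauliAtSplit, reindex_apply, submatrix_apply, Prod.mk.eta, Prod.mk.eta,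
    Equiv.symm_apply_apply, Equiv.symm_apply_apply,
    sum_smul_pauliAt_update_apply σ c (by simp)] at hentry
  exact (mul_eq_zero.mp hentry).resolve_right hσ

end pauliAtSplit

theorem qbm_cqlvm_iff_general (m n : ℕ)
    (b Γ : Fin (m + n) → ℝ) (w : Fin (m + n) → Fin (m + n) → ℝ)
    (H : Matrix ((Fin m → Fin 2) × (Fin n → Fin 2)) ((Fin m → Fin 2) × (Fin n → Fin 2)) ℂ)
    (hH : H = -(∑ i : Fin (m + n), (b i : ℂ) • pauliAtSplit m n pauliZ i)
        - ∑ i : Fin (m + n), ∑ j ∈ Finset.univ.filter (· < i),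
            (w i j : ℂ) • (pauliAtSplit m n pauliZ i * pauliAtSplit m n pauliZ j)
        - ∑ i : Fin (m + n), (Γ i : ℂ) • pauliAtSplit m n pauliX i) :
    BlockDiagFst H ↔ ∀ i : Fin (m + n), (i : ℕ) < m → Γ i = 0 := by
  have hZ (i : Fin (m + n)) : (pauliAtSplit m n pauliZ i).IsDiag := pauliZ_isDiag.pauliAtSplit i
  have hIsing : (-(∑ i : Fin (m + n), (b i : ℂ) • pauliAtSplit m n pauliZ i)
      - ∑ i : Fin (m + n), ∑ j ∈ Finset.univ.filter (· < i),
          (w i j : ℂ) • (pauliAtSplit m n pauliZ i * pauliAtSplit m n pauliZ j)).IsDiag :=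
    (isDiag_sum _ fun i _ => (hZ i).smul _).neg.sub
      (isDiag_sum _ fun i _ => isDiag_sum _ fun j _ => ((hZ i).mul (hZ j)).smul _)
  rw [hH, blockDiagFst_isDiag_sub_iff hIsing]
  refine ⟨fun h i hi => ?_, fun h => blockDiagFst_sum_smul_pauliAtSplit pauliX
    fun i hi => by rw [h i hi, Complex.ofReal_zero]⟩
  exact_mod_cast h.coeff_eq_zero_of_lt (by simp [pauliX]) hi

/-- The QBM is a CQ-LVM iff the transverse field vanishes on the
visible units. -/
theorem qbm_cqlvm_iff (m n : ℕ) (hm : 1 ≤ m) (hn : 1 ≤ n)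
    (b Γ : Fin (m + n) → ℝ) (w : Fin (m + n) → Fin (m + n) → ℝ)
    (H : Matrix ((Fin m → Fin 2) × (Fin n → Fin 2)) ((Fin m → Fin 2) × (Fin n → Fin 2)) ℂ)
    (hH : H = -(∑ i : Fin (m + n), (b i : ℂ) • pauliAtSplit m n pauliZ i)
        - ∑ i : Fin (m + n), ∑ j ∈ Finset.univ.filter (· < i),
            (w i j : ℂ) • (pauliAtSplit m n pauliZ i * pauliAtSplit m n pauliZ j)
        - ∑ i : Fin (m + n), (Γ i : ℂ) • pauliAtSplit m n pauliX i) :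
    BlockDiagFst H ↔ ∀ i : Fin (m + n), (i : ℕ) < m → Γ i = 0 :=
  qbm_cqlvm_iff_general m n b Γ w H hH
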